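/- Fix an integer r ≥ 1 and let G_r(x,z) = Σ_{n≥0} Σ_{p≥0} c_r(n,p) x^{n-(r+2)p} z^p ∈ ℚ[[x,z]] (well defined since c_r(n,p) = 0 unless (r+2)p ≤ n). Then (∂/∂x)[x·G_r(x,z)] = (1 - z - (r+1)x^{r+2})·(∂/∂z) G_r(x,z), where ∂/∂x and ∂/∂z denote formal partial derivatives. -/

import Mathlib

/-- Steps of a Motzkin path: up, horizontal, down. -/
inductive Step : Type
  | U | H | D
  deriving DecidableEq

/-- A list of steps is a Motzkin path if every prefix has at least as many
up steps as down steps, and the total numbers of up and down steps agree. -/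
def IsMotzkin (l : List Step) : Prop :=
  (∀ k : ℕ, (l.take k).count Step.D ≤ (l.take k).count Step.U) ∧
    l.count Step.U = l.count Step.D

/-- The number of plateaus of length `r` (occurrences of a U step, then `r`
consecutive H steps, then a D step) in a path. -/
def plateauCountR (r : ℕ) (l : List Step) : ℕ :=
  ((Finset.range l.length).filter
    (fun i => (l.drop i).take (r + 2)
      = Step.U :: (List.replicate r Step.H ++ [Step.D]))).card

instance : Fintype Step :=
  ⟨{Step.U, Step.H, Step.D}, by intro x; cases x <;> decide⟩

namespace PlateauAux

/-- the plateau block -/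
def blk (r : ℕ) : List Step := Step.U :: (List.replicate r Step.H ++ [Step.D])

lemma blk_length (r : ℕ) : (blk r).length = r + 2 := by
  simp [blk]

lemma blk_getElem?_zero (r : ℕ) : (blk r)[0]? = some Step.U := by simp [blk]

lemma blk_getElem?_mid (r t : ℕ) (h1 : 1 ≤ t) (h2 : t ≤ r) : (blk r)[t]? = some Step.H := by
  obtain ⟨s, rfl⟩ := Nat.exists_eq_add_of_le' h1
  simp only [blk, List.getElem?_cons_succ]
  rw [List.getElem?_append_left (by simp; omega), List.getElem?_replicate]
  simp; omega

lemma blk_getElem?_last (r : ℕ) : (blk r)[r+1]? = some Step.D := by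
  simp only [blk, List.getElem?_cons_succ]
  rw [List.getElem?_append_right (by simp)]
  simp

lemma blk_getElem?_ne_U (r t : ℕ) (h1 : 1 ≤ t) (h2 : t ≤ r + 1) : (blk r)[t]? ≠ some Step.U := by
  rcases Nat.lt_or_ge t (r+1) with h | h
  · rw [blk_getElem?_mid r t h1 (by omega)]; simp
  · have : t = r + 1 := by omega
    rw [this, blk_getElem?_last]; simp

/-- occurrence of the block at position k -/
def Occ (r : ℕ) (l : List Step) (k : ℕ) : Prop := (l.drop k).take (r+2) = blk r

lemma occ_iff_getElem? {r : ℕ} {l : List Step} {k : ℕ} :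
    Occ r l k ↔ ∀ t, t < r + 2 → l[k + t]? = (blk r)[t]? := by
  constructor
  · intro h t ht
    have := congrArg (fun x => x[t]?) h
    simpa [List.getElem?_take, ht, List.getElem?_drop] using this
  · intro h
    apply List.ext_getElem?
    intro m
    rcases Nat.lt_or_ge m (r+2) with hm | hm
    · rw [List.getElem?_take, if_pos hm, List.getElem?_drop, h m hm]
    · rw [List.getElem?_take, if_neg (by omega), eq_comm, List.getElem?_eq_none]
      rw [blk_length]; omega

lemma Occ.le_length {r : ℕ} {l : List Step} {k : ℕ} (h : Occ r l k) : k + (r + 2) ≤ l.length := by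
  have := congrArg List.length h
  rw [List.length_take, List.length_drop, blk_length] at this
  omega


variable {r : ℕ}

/-- two occurrences cannot overlap -/
lemma occ_disjoint {l : List Step} {k k' : ℕ} (h : Occ r l k) (h' : Occ r l k')
    (hlt : k < k') : k + (r + 2) ≤ k' := by
  by_contra hc
  have hU : l[k']? = some Step.U := by
    have := occ_iff_getElem?.mp h' 0 (by omega)
    simpa [blk_getElem?_zero] using this
  have := occ_iff_getElem?.mp h (k' - k) (by omega)
  rw [Nat.add_sub_cancel' (le_of_lt hlt)] at this
  rw [hU] at this
  exact blk_getElem?_ne_U r (k' - k) (by omega) (by omega) this.symm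

/-- insertion of the block at position i -/
def ins (r : ℕ) (i : ℕ) (l : List Step) : List Step := l.take i ++ (blk r ++ l.drop i)

lemma ins_length {i : ℕ} {l : List Step} (hi : i ≤ l.length) :
    (ins r i l).length = l.length + (r + 2) := by
  simp [ins, blk_length]; omega

lemma ins_getElem?_lt {i : ℕ} {l : List Step} (hi : i ≤ l.length) {m : ℕ} (hm : m < i) :
    (ins r i l)[m]? = l[m]? := by
  rw [ins, List.getElem?_append_left (by rw [List.length_take]; omega), List.getElem?_take,
    if_pos hm]

lemma ins_getElem?_mid {i : ℕ} {l : List Step} (hi : i ≤ l.length) {m : ℕ} (h1 : i ≤ m)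
    (h2 : m < i + (r + 2)) : (ins r i l)[m]? = (blk r)[m - i]? := by
  rw [ins, List.getElem?_append_right (by rw [List.length_take]; omega), List.length_take,
    List.getElem?_append_left (by rw [blk_length]; omega)]
  congr 1; omega

lemma ins_getElem?_ge {i : ℕ} {l : List Step} (hi : i ≤ l.length) {m : ℕ}
    (h : i + (r + 2) ≤ m) : (ins r i l)[m]? = l[m - (r + 2)]? := by
  rw [ins, List.getElem?_append_right (by rw [List.length_take]; omega), List.length_take,
    List.getElem?_append_right (by rw [blk_length]; omega), List.getElem?_drop, blk_length]
  congr 1; omega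

lemma occ_ins_self {i : ℕ} {l : List Step} (hi : i ≤ l.length) : Occ r (ins r i l) i := by
  rw [occ_iff_getElem?]
  intro t ht
  rw [ins_getElem?_mid hi (by omega) (by omega)]
  congr 1; omega

lemma occ_ins_left {i k : ℕ} {l : List Step} (hi : i ≤ l.length) (hk : k + (r + 2) ≤ i) :
    Occ r (ins r i l) k ↔ Occ r l k := by
  rw [occ_iff_getElem?, occ_iff_getElem?]
  exact forall₂_congr fun t ht => by rw [ins_getElem?_lt hi (by omega)]

lemma occ_ins_right {i k : ℕ} {l : List Step} (hi : i ≤ l.length) (hk : i ≤ k) :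
    Occ r (ins r i l) (k + (r + 2)) ↔ Occ r l k := by
  rw [occ_iff_getElem?, occ_iff_getElem?]
  refine forall₂_congr fun t ht => ?_
  rw [show k + (r+2) + t = k + t + (r+2) by omega, ins_getElem?_ge hi (by omega),
    Nat.add_sub_cancel]

lemma not_occ_ins_straddle1 {i k : ℕ} {l : List Step} (hi : i ≤ l.length) (h1 : k < i)
    (h2 : i < k + (r + 2)) : ¬ Occ r (ins r i l) k := by
  intro h
  have := occ_iff_getElem?.mp h (i - k) (by omega)
  rw [Nat.add_sub_cancel' (le_of_lt h1), ins_getElem?_mid hi le_rfl (by omega), Nat.sub_self,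
    blk_getElem?_zero] at this
  exact blk_getElem?_ne_U r (i - k) (by omega) (by omega) this.symm

lemma not_occ_ins_straddle2 {i k : ℕ} {l : List Step} (hi : i ≤ l.length) (h1 : i < k)
    (h2 : k < i + (r + 2)) : ¬ Occ r (ins r i l) k := by
  intro h
  have := occ_iff_getElem?.mp h 0 (by omega)
  rw [Nat.add_zero, ins_getElem?_mid hi (by omega) h2, blk_getElem?_zero] at this
  exact blk_getElem?_ne_U r (k - i) (by omega) (by omega) this


instance (r : ℕ) (l : List Step) (k : ℕ) : Decidable (Occ r l k) :=
  inferInstanceAs (Decidable (_ = _))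

/-- the set of occurrence positions -/
def occSet (r : ℕ) (l : List Step) : Finset ℕ :=
  (Finset.range l.length).filter (fun k => Occ r l k)

lemma mem_occSet {l : List Step} {k : ℕ} : k ∈ occSet r l ↔ Occ r l k := by
  unfold occSet
  rw [Finset.mem_filter, Finset.mem_range]
  exact ⟨fun h => h.2, fun h => ⟨by have := h.le_length; omega, h⟩⟩

lemma plateauCountR_eq_card (l : List Step) : plateauCountR r l = (occSet r l).card := rfl

lemma occSet_ins {i : ℕ} {l : List Step} (hi : i ≤ l.length) :
    occSet r (ins r i l) = insert i
      (((occSet r l).filter (fun k => k + (r + 2) ≤ i)) ∪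
        ((occSet r l).filter (fun k => i ≤ k)).image (· + (r + 2))) := by
  ext m
  simp only [mem_occSet, Finset.mem_insert, Finset.mem_union, Finset.mem_filter,
    Finset.mem_image]
  constructor
  · intro h
    rcases Nat.lt_trichotomy m i with hm | rfl | hm
    · rcases Nat.lt_or_ge (m + (r + 2)) (i + 1) with hm2 | hm2
      · exact Or.inr (Or.inl ⟨(occ_ins_left hi (by omega)).mp h, by omega⟩)
      · exact absurd h (not_occ_ins_straddle1 hi hm (by omega))
    · exact Or.inl rfl
    · rcases Nat.lt_or_ge m (i + (r + 2)) with hm2 | hm2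
      · exact absurd h (not_occ_ins_straddle2 hi hm hm2)
      · refine Or.inr (Or.inr ⟨m - (r + 2), ⟨?_, by omega⟩, by omega⟩)
        exact (occ_ins_right hi (show i ≤ m - (r+2) by omega)).mp
          (by rw [show m - (r+2) + (r+2) = m by omega]; exact h)
  · rintro (rfl | ⟨h1, h2⟩ | ⟨k, ⟨h1, h2⟩, rfl⟩)
    · exact occ_ins_self hi
    · exact (occ_ins_left hi h2).mpr h1
    · exact (occ_ins_right hi h2).mpr h1


/-- number of occurrences strictly straddling position i -/
def straddle (r : ℕ) (l : List Step) (i : ℕ) : Finset ℕ :=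
  (occSet r l).filter (fun k => k < i ∧ i < k + (r + 2))

lemma card_occSet_ins {i : ℕ} {l : List Step} (hi : i ≤ l.length) :
    (occSet r (ins r i l)).card + (straddle r l i).card = (occSet r l).card + 1 := by
  rw [occSet_ins hi]
  rw [Finset.card_insert_of_notMem, Finset.card_union_of_disjoint,
    Finset.card_image_of_injective _ (add_left_injective _)]
  · have key : ((occSet r l).filter (fun k => k + (r + 2) ≤ i)).card +
        ((occSet r l).filter (fun k => i ≤ k)).card + (straddle r l i).card
        = (occSet r l).card := by
      unfold straddle
      rw [Finset.card_filter, Finset.card_filter, Finset.card_filter, ← Finset.sum_add_distrib,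
        ← Finset.sum_add_distrib]
      rw [Finset.card_eq_sum_ones]
      refine Finset.sum_congr rfl fun k _ => ?_
      split_ifs <;> omega
    omega
  · rw [Finset.disjoint_left]
    intro a ha hb
    rw [Finset.mem_filter] at ha
    rw [Finset.mem_image] at hb
    obtain ⟨b, hb1, rfl⟩ := hb
    rw [Finset.mem_filter] at hb1
    omega
  · intro hmem
    rw [Finset.mem_union, Finset.mem_filter, Finset.mem_image] at hmem
    rcases hmem with h | ⟨b, hb1, hb2⟩
    · omega
    · rw [Finset.mem_filter] at hb1; omega

lemma card_straddle_le_one {l : List Step} {i : ℕ} : (straddle r l i).card ≤ 1 := by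
  rw [Finset.card_le_one]
  intro a ha b hb
  rw [straddle, Finset.mem_filter, mem_occSet] at ha hb
  rcases Nat.lt_trichotomy a b with h | h | h
  · have := occ_disjoint ha.1 hb.1 h; omega
  · exact h
  · have := occ_disjoint hb.1 ha.1 h; omega

lemma sum_card_straddle {l : List Step} :
    ∑ i ∈ Finset.range (l.length + 1), (straddle r l i).card
      = (r + 1) * (occSet r l).card := by
  unfold straddle
  have : ∀ i, ((occSet r l).filter (fun k => k < i ∧ i < k + (r + 2))).card
      = ∑ k ∈ occSet r l, if k < i ∧ i < k + (r + 2) then 1 else 0 :=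
    fun i => Finset.card_filter _ _
  simp_rw [this]
  rw [Finset.sum_comm]
  have inner : ∀ k ∈ occSet r l,
      (∑ i ∈ Finset.range (l.length + 1), if k < i ∧ i < k + (r + 2) then 1 else 0) = r + 1 := by
    intro k hk
    have hkl := (mem_occSet.mp hk).le_length
    rw [← Finset.card_filter]
    have : (Finset.range (l.length + 1)).filter (fun i => k < i ∧ i < k + (r + 2))
        = Finset.Ioo k (k + (r + 2)) := by
      ext j
      simp only [Finset.mem_filter, Finset.mem_range, Finset.mem_Ioo]
      omega
    rw [this, Nat.card_Ioo]
    omega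
  rw [Finset.sum_congr rfl inner, Finset.sum_const, smul_eq_mul, mul_comm]

lemma length_ge_card_occSet (l : List Step) : (r + 2) * (occSet r l).card ≤ l.length := by
  classical
  have hdisj : (occSet r l : Set ℕ).PairwiseDisjoint (fun k => Finset.Ico k (k + (r + 2))) := by
    intro a ha b hb hab
    simp only [Finset.mem_coe, mem_occSet] at ha hb
    refine Finset.disjoint_left.mpr ?_
    intro x hx1 hx2
    rw [Finset.mem_Ico] at hx1 hx2
    rcases Nat.lt_trichotomy a b with h | h | h
    · have := occ_disjoint ha hb h; omega
    · exact hab h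
    · have := occ_disjoint hb ha h; omega
  have hsub : (occSet r l).biUnion (fun k => Finset.Ico k (k + (r + 2)))
      ⊆ Finset.range l.length := by
    intro x hx
    rw [Finset.mem_biUnion] at hx
    obtain ⟨k, hk, hxk⟩ := hx
    have := (mem_occSet.mp hk).le_length
    rw [Finset.mem_Ico] at hxk
    rw [Finset.mem_range]
    omega
  calc (r + 2) * (occSet r l).card = ∑ k ∈ occSet r l, (Finset.Ico k (k + (r + 2))).card := by
        simp [Nat.card_Ico, mul_comm]
    _ = ((occSet r l).biUnion (fun k => Finset.Ico k (k + (r + 2)))).card :=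
        (Finset.card_biUnion hdisj).symm
    _ ≤ (Finset.range l.length).card := Finset.card_le_card hsub
    _ = l.length := Finset.card_range _


lemma blk_take_small {m : ℕ} (h1 : 1 ≤ m) (h2 : m ≤ r + 1) :
    (blk r).take m = Step.U :: List.replicate (m - 1) Step.H := by
  obtain ⟨s, rfl⟩ := Nat.exists_eq_add_of_le' h1
  rw [blk, List.take_succ_cons, List.take_append, List.take_replicate,
    List.length_replicate, Nat.add_sub_cancel, show min s r = s by omega,
    show s - r = 0 by omega, List.take_zero, List.append_nil]

lemma blk_take_large {m : ℕ} (h : r + 2 ≤ m) : (blk r).take m = blk r :=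
  List.take_of_length_le (by rw [blk_length]; omega)

lemma count_blk_take_U (m : ℕ) : ((blk r).take m).count Step.U = min m 1 := by
  rcases Nat.eq_zero_or_pos m with rfl | hm
  · simp
  rcases Nat.lt_or_ge m (r + 2) with h | h
  · rw [blk_take_small hm (by omega)]
    simp [List.count_cons, List.count_replicate]
    omega
  · rw [blk_take_large h, blk]
    simp [List.count_cons, List.count_append, List.count_replicate, List.count_singleton]
    omega

lemma count_blk_take_D (m : ℕ) : ((blk r).take m).count Step.D
    = if r + 2 ≤ m then 1 else 0 := by
  rcases Nat.lt_or_ge m (r + 2) with h | h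
  · rw [if_neg (by omega)]
    rcases Nat.eq_zero_or_pos m with rfl | hm
    · simp
    rw [blk_take_small hm (by omega)]
    simp [List.count_cons, List.count_replicate]
  · rw [if_pos h, blk_take_large h, blk]
    simp [List.count_cons, List.count_append, List.count_replicate, List.count_singleton]

lemma count_take_ins (c : Step) {i : ℕ} {l : List Step} (hi : i ≤ l.length) (k : ℕ) :
    ((ins r i l).take k).count c
      = (l.take (min k i)).count c + ((blk r).take (k - i)).count c
        + ((l.drop i).take (k - i - (r + 2))).count c := by
  rw [ins, List.take_append, List.take_append,
    List.count_append, List.count_append, List.take_take, List.length_take, blk_length,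
    min_eq_left hi, add_assoc]

lemma count_take_add (c : Step) (l : List Step) (i m : ℕ) :
    (l.take i).count c + ((l.drop i).take m).count c = (l.take (i + m)).count c := by
  rw [List.take_add, List.count_append]

lemma motzkin_ins {i : ℕ} {l : List Step} (hl : IsMotzkin l) (hi : i ≤ l.length) :
    IsMotzkin (ins r i l) := by
  constructor
  · intro k
    rw [count_take_ins Step.D hi, count_take_ins Step.U hi, count_blk_take_D, count_blk_take_U]
    rcases Nat.lt_or_ge k i with hk | hk
    · rw [show k - i = 0 by omega, show min k i = k by omega,
        if_neg (show ¬ r + 2 ≤ (0:ℕ) by omega), show min (0:ℕ) 1 = 0 by omega,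
        show (0:ℕ) - (r+2) = 0 by omega]
      simp only [List.take_zero, List.count_nil, Nat.add_zero]
      exact hl.1 k
    rcases Nat.lt_or_ge k (i + (r + 2)) with hk2 | hk2
    · rw [show k - i - (r+2) = 0 by omega, if_neg (show ¬ r + 2 ≤ k - i by omega),
        show min k i = i by omega]
      simp only [List.take_zero, List.count_nil, Nat.add_zero]
      have := hl.1 i
      omega
    · rw [if_pos (by omega)]
      have hD := count_take_add Step.D l i (k - i - (r + 2))
      have hU := count_take_add Step.U l i (k - i - (r + 2))
      have := hl.1 (i + (k - i - (r + 2)))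
      rw [show min k i = i by omega]
      omega
  · rw [ins, List.count_append, List.count_append, List.count_append, List.count_append]
    have hU : (blk r).count Step.U = 1 := by
      have := count_blk_take_U (r := r) (r + 2)
      rwa [blk_take_large le_rfl, show min (r+2) 1 = 1 by omega] at this
    have hD : (blk r).count Step.D = 1 := by
      have := count_blk_take_D (r := r) (r + 2)
      rwa [blk_take_large le_rfl, if_pos le_rfl] at this
    have h2 := hl.2
    rw [← List.take_append_drop i l, List.count_append, List.count_append] at h2
    omega

lemma motzkin_of_ins {i : ℕ} {l : List Step} (hi : i ≤ l.length)
    (h : IsMotzkin (ins r i l)) : IsMotzkin l := by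
  constructor
  · intro k
    rcases Nat.lt_or_ge k i with hk | hk
    · have := h.1 k
      rw [count_take_ins Step.D hi, count_take_ins Step.U hi, show k - i = 0 by omega] at this
      rw [show (0:ℕ) - (r+2) = 0 by omega] at this
      simp only [List.take_zero, List.count_nil, Nat.add_zero, show min k i = k by omega]
        at this
      exact this
    · have := h.1 (k + (r + 2))
      rw [count_take_ins Step.D hi, count_take_ins Step.U hi, count_blk_take_D,
        count_blk_take_U, show min (k + (r+2)) i = i by omega,
        show k + (r + 2) - i - (r + 2) = k - i by omega, if_pos (by omega),
        show min (k + (r+2) - i) 1 = 1 by omega] at this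
      have hD := count_take_add Step.D l i (k - i)
      have hU := count_take_add Step.U l i (k - i)
      rw [show i + (k - i) = k by omega] at hD hU
      omega
  · have h2 := h.2
    rw [ins, List.count_append, List.count_append, List.count_append, List.count_append] at h2
    have hU : (blk r).count Step.U = 1 := by
      have := count_blk_take_U (r := r) (r + 2)
      rwa [blk_take_large le_rfl, show min (r+2) 1 = 1 by omega] at this
    have hD : (blk r).count Step.D = 1 := by
      have := count_blk_take_D (r := r) (r + 2)
      rwa [blk_take_large le_rfl, if_pos le_rfl] at this
    have hsplit := List.take_append_drop i l
    have hDc : l.count Step.D = (l.take i).count Step.D + (l.drop i).count Step.D := by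
      conv_lhs => rw [← hsplit]
      rw [List.count_append]
    have hUc : l.count Step.U = (l.take i).count Step.U + (l.drop i).count Step.U := by
      conv_lhs => rw [← hsplit]
      rw [List.count_append]
    omega

/-- deletion of block at an occurrence -/
def del (r : ℕ) (j : ℕ) (m : List Step) : List Step := m.take j ++ m.drop (j + (r + 2))

lemma ins_del {j : ℕ} {m : List Step} (h : Occ r m j) : ins r j (del r j m) = m := by
  have hj := h.le_length
  have h1 : (del r j m).take j = m.take j := by
    rw [del, List.take_append, List.take_take, min_self, List.length_take,
      show min j m.length = j by omega, Nat.sub_self, List.take_zero, List.append_nil]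
  have h2 : (del r j m).drop j = m.drop (j + (r + 2)) := by
    rw [del, List.drop_append, List.length_take,
      show min j m.length = j by omega, Nat.sub_self, List.drop_zero,
      List.drop_of_length_le (by rw [List.length_take]; omega), List.nil_append]
  rw [ins, h1, h2]
  have hblk : blk r ++ m.drop (j + (r + 2)) = m.drop j := by
    rw [← h, ← List.drop_drop]
    exact (List.take_append_drop _ _)
  rw [hblk, List.take_append_drop]

lemma del_ins {i : ℕ} {l : List Step} (hi : i ≤ l.length) : del r i (ins r i l) = l := by
  have h1 : (ins r i l).take i = l.take i := by
    rw [ins, List.take_append, List.take_take, min_self, List.length_take,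
      show min i l.length = i by omega, Nat.sub_self, List.take_zero, List.append_nil]
  have h2 : (ins r i l).drop (i + (r + 2)) = l.drop i := by
    rw [ins, List.drop_append, List.length_take,
      show min i l.length = i by omega,
      List.drop_of_length_le (by rw [List.length_take]; omega), List.nil_append,
      List.drop_append, blk_length,
      List.drop_of_length_le (by rw [blk_length]; omega), List.nil_append,
      show i + (r + 2) - i - (r + 2) = 0 by omega, List.drop_zero]
  rw [del, h1, h2, List.take_append_drop]

lemma del_length {j : ℕ} {m : List Step} (h : Occ r m j) :
    (del r j m).length = m.length - (r + 2) := by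
  have := h.le_length
  rw [del, List.length_append, List.length_take, List.length_drop]
  omega

lemma motzkin_del {j : ℕ} {m : List Step} (hm : IsMotzkin m) (h : Occ r m j) :
    IsMotzkin (del r j m) := by
  have hj := h.le_length
  refine motzkin_of_ins (r := r) (i := j) (l := del r j m) ?_ ?_
  · rw [del_length h]; omega
  · rw [ins_del h]; exact hm


/-- all lists of length n -/
noncomputable def allLists (n : ℕ) : Finset (List Step) :=
  (Finset.univ : Finset (List.Vector Step n)).map ⟨fun v : List.Vector Step n => v.1, fun _ _ h => Subtype.ext h⟩

lemma mem_allLists {n : ℕ} {l : List Step} : l ∈ allLists n ↔ l.length = n := by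
  simp only [allLists, Finset.mem_map, Finset.mem_univ, true_and, Function.Embedding.coeFn_mk]
  constructor
  · rintro ⟨⟨v, hv⟩, rfl⟩; exact hv
  · intro h; exact ⟨⟨l, h⟩, rfl⟩

/-- Motzkin paths of length n with p plateaus, as a finset -/
noncomputable def mz (r n p : ℕ) : Finset (List Step) :=
  @Finset.filter _ (fun l => IsMotzkin l ∧ plateauCountR r l = p) (Classical.decPred _)
    (allLists n)

lemma mem_mz {n p : ℕ} {l : List Step} :
    l ∈ mz r n p ↔ l.length = n ∧ IsMotzkin l ∧ plateauCountR r l = p := by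
  classical
  simp only [mz, Finset.mem_filter, mem_allLists]

lemma card_mz (n p : ℕ) :
    Nat.card {l : List Step // l.length = n ∧ IsMotzkin l ∧ plateauCountR r l = p}
      = (mz r n p).card := by
  rw [Nat.card_congr (Equiv.subtypeEquivRight (fun l => (mem_mz (r := r)).symm))]
  exact Nat.card_eq_finsetCard _

lemma mz_eq_empty {n p : ℕ} (h : n < (r + 2) * p) : mz r n p = ∅ := by
  ext l
  simp only [mem_mz, Finset.notMem_empty, iff_false, not_and]
  rintro rfl hm hp
  have := length_ge_card_occSet (r := r) l
  rw [← plateauCountR_eq_card, hp] at this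
  omega

lemma card_filter_product {α β : Type*} (s : Finset α) (t : Finset β) (P : α × β → Prop)
    [DecidablePred P] :
    ((s ×ˢ t).filter P).card = ∑ a ∈ s, (t.filter (fun b => P (a, b))).card := by
  rw [Finset.card_filter, Finset.sum_product]
  exact Finset.sum_congr rfl fun a _ => (Finset.card_filter _ _).symm

lemma filter_straddle_one (l : List Step) :
    ((Finset.range (l.length + 1)).filter (fun i => (straddle r l i).card = 1)).card
      = (r + 1) * (occSet r l).card := by
  classical
  have hsum := sum_card_straddle (r := r) (l := l)
  rw [← Finset.sum_filter_add_sum_filter_not (Finset.range (l.length + 1))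
    (fun i => (straddle r l i).card = 1)] at hsum
  have h1 : ∑ i ∈ (Finset.range (l.length + 1)).filter (fun i => (straddle r l i).card = 1),
      (straddle r l i).card
      = ((Finset.range (l.length + 1)).filter (fun i => (straddle r l i).card = 1)).card := by
    rw [Finset.card_eq_sum_ones]
    exact Finset.sum_congr rfl fun i hi => (Finset.mem_filter.mp hi).2
  have h2 : ∑ i ∈ (Finset.range (l.length + 1)).filter (fun i => ¬ (straddle r l i).card = 1),
      (straddle r l i).card = 0 := by
    refine Finset.sum_eq_zero fun i hi => ?_
    have := card_straddle_le_one (r := r) (l := l) (i := i)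
    have h3 := (Finset.mem_filter.mp hi).2
    omega
  omega

lemma filter_straddle_zero (l : List Step) :
    ((Finset.range (l.length + 1)).filter (fun i => (straddle r l i).card = 0)).card
      + (r + 1) * (occSet r l).card = l.length + 1 := by
  classical
  rw [← filter_straddle_one (r := r) l]
  have hfe : (Finset.range (l.length + 1)).filter (fun i => (straddle r l i).card = 0)
      = (Finset.range (l.length + 1)).filter (fun i => ¬ (straddle r l i).card = 1) := by
    refine Finset.filter_congr fun i _ => ?_
    have := card_straddle_le_one (r := r) (l := l) (i := i)
    constructor <;> omega
  rw [hfe, add_comm, Finset.card_filter_add_card_filter_not, Finset.card_range]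

lemma filter_ins_count (l : List Step) (p : ℕ) :
    ((Finset.range (l.length + 1)).filter
        (fun i => plateauCountR r (ins r i l) = p + 1)).card
      = if plateauCountR r l = p then l.length + 1 - (r + 1) * p
        else if plateauCountR r l = p + 1 then (r + 1) * (p + 1) else 0 := by
  classical
  have key : ∀ i ∈ Finset.range (l.length + 1),
      (plateauCountR r (ins r i l) = p + 1 ↔ (straddle r l i).card + p = (occSet r l).card) := by
    intro i hi
    rw [Finset.mem_range] at hi
    have hcc := card_occSet_ins (r := r) (i := i) (l := l) (by omega)
    rw [plateauCountR_eq_card]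
    omega
  rw [Finset.filter_congr key]
  split_ifs with h1 h2
  · rw [plateauCountR_eq_card] at h1
    have hfe : (Finset.range (l.length + 1)).filter
          (fun i => (straddle r l i).card + p = (occSet r l).card)
        = (Finset.range (l.length + 1)).filter (fun i => (straddle r l i).card = 0) := by
      refine Finset.filter_congr fun i _ => ?_
      constructor <;> omega
    rw [hfe]
    have := filter_straddle_zero (r := r) l
    rw [h1] at this
    omega
  · rw [plateauCountR_eq_card] at h2
    have hfe : (Finset.range (l.length + 1)).filter
          (fun i => (straddle r l i).card + p = (occSet r l).card)
        = (Finset.range (l.length + 1)).filter (fun i => (straddle r l i).card = 1) := by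
      refine Finset.filter_congr fun i _ => ?_
      constructor <;> omega
    rw [hfe, filter_straddle_one, h2]
  · rw [plateauCountR_eq_card] at h1 h2
    rw [Finset.filter_false_of_mem, Finset.card_empty]
    intro i hi
    have := card_straddle_le_one (r := r) (l := l) (i := i)
    omega


theorem main_count (r a p : ℕ) :
    (p + 1) * (mz r (a + (r + 2) * p + (r + 2)) (p + 1)).card
      = (a + p + 1) * (mz r (a + (r + 2) * p) p).card
        + (r + 1) * (p + 1) * (mz r (a + (r + 2) * p) (p + 1)).card := by
  classical
  obtain ⟨n, hn⟩ : ∃ n, n = a + (r + 2) * p := ⟨_, rfl⟩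
  rw [← hn]
  have hsub : n + 1 - (r + 1) * p = a + p + 1 := by
    have h : n = a + ((r + 1) * p + p) := by rw [hn]; ring
    generalize (r + 1) * p = w at h ⊢
    omega
  clear hn
  set T := ((mz r (n + (r + 2)) (p + 1)) ×ˢ Finset.range (n + (r + 2))).filter
      (fun x => Occ r x.1 x.2) with hT
  set M := (allLists n).filter (fun l => IsMotzkin l) with hM
  set S := (M ×ˢ Finset.range (n + 1)).filter
      (fun x => plateauCountR r (ins r x.2 x.1) = p + 1) with hS
  have step1 : (mz r (n + (r + 2)) (p + 1)).card * (p + 1) = T.card := by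
    rw [hT, card_filter_product _ _ (fun x => Occ r x.1 x.2)]
    rw [Finset.sum_congr rfl (fun m hm => ?_), Finset.sum_const, smul_eq_mul]
    have hlen : m.length = n + (r + 2) := (mem_mz.mp hm).1
    have hocc : (Finset.range (n + (r + 2))).filter (fun k => Occ r m k) = occSet r m := by
      rw [occSet, hlen]
    rw [hocc, ← plateauCountR_eq_card, (mem_mz.mp hm).2.2]
  have step2 : S.card = T.card := by
    refine Finset.card_bij' (fun x _ => (ins r x.2 x.1, x.2)) (fun x _ => (del r x.2 x.1, x.2))
      ?_ ?_ ?_ ?_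
    · rintro ⟨l, k⟩ hx
      obtain ⟨hx1, hx3⟩ := Finset.mem_filter.mp hx
      obtain ⟨hl, hk⟩ := Finset.mem_product.mp hx1
      obtain ⟨hla, hlm⟩ := Finset.mem_filter.mp hl
      rw [Finset.mem_range] at hk
      have hlen : l.length = n := mem_allLists.mp hla
      have hkl : k ≤ l.length := by omega
      show (ins r k l, k) ∈ T
      refine Finset.mem_filter.mpr ⟨Finset.mem_product.mpr ⟨mem_mz.mpr
        ⟨by rw [ins_length hkl, hlen], motzkin_ins hlm hkl, hx3⟩,
        Finset.mem_range.mpr (by omega)⟩, occ_ins_self hkl⟩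
    · rintro ⟨m, j⟩ hx
      obtain ⟨hx1, hocc⟩ := Finset.mem_filter.mp hx
      obtain ⟨hm, hj⟩ := Finset.mem_product.mp hx1
      obtain ⟨hlen, hmm, hpc⟩ := mem_mz.mp hm
      have hjl := hocc.le_length
      show (del r j m, j) ∈ S
      refine Finset.mem_filter.mpr ⟨Finset.mem_product.mpr ⟨Finset.mem_filter.mpr
        ⟨mem_allLists.mpr (by rw [del_length hocc, hlen]; omega), motzkin_del hmm hocc⟩,
        Finset.mem_range.mpr (by omega)⟩, ?_⟩
      show plateauCountR r (ins r j (del r j m)) = p + 1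
      rw [ins_del hocc]
      exact hpc
    · rintro ⟨l, k⟩ hx
      obtain ⟨hx1, hx3⟩ := Finset.mem_filter.mp hx
      obtain ⟨hl, hk⟩ := Finset.mem_product.mp hx1
      obtain ⟨hla, hlm⟩ := Finset.mem_filter.mp hl
      rw [Finset.mem_range] at hk
      have hlen : l.length = n := mem_allLists.mp hla
      show (del r k (ins r k l), k) = (l, k)
      rw [del_ins (by omega)]
    · rintro ⟨m, j⟩ hx
      obtain ⟨hx1, hocc⟩ := Finset.mem_filter.mp hx
      show (ins r j (del r j m), j) = (m, j)
      rw [ins_del hocc]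
  have step3 : S.card = (mz r n p).card * (n + 1 - (r + 1) * p)
      + (mz r n (p + 1)).card * ((r + 1) * (p + 1)) := by
    rw [hS, card_filter_product _ _ (fun x => plateauCountR r (ins r x.2 x.1) = p + 1)]
    have hinner : ∀ l ∈ M, ((Finset.range (n + 1)).filter
        (fun i => plateauCountR r (ins r i l) = p + 1)).card
        = (if plateauCountR r l = p then n + 1 - (r + 1) * p else 0)
          + (if plateauCountR r l = p + 1 then (r + 1) * (p + 1) else 0) := by
      intro l hl
      have hlen : l.length = n := mem_allLists.mp (Finset.mem_filter.mp hl).1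
      have h := filter_ins_count (r := r) l p
      rw [hlen] at h
      rw [h]
      split_ifs with h1 h2 <;> omega
    rw [Finset.sum_congr rfl hinner, Finset.sum_add_distrib, ← Finset.sum_filter,
      ← Finset.sum_filter, Finset.sum_const, Finset.sum_const, smul_eq_mul, smul_eq_mul]
    have hMp : ∀ q : ℕ, M.filter (fun l => plateauCountR r l = q) = mz r n q := by
      intro q
      ext l
      simp only [hM, Finset.mem_filter, mem_allLists, mem_mz]
      tauto
    rw [hMp p, hMp (p + 1)]
  have key : (mz r (n + (r + 2)) (p + 1)).card * (p + 1)
      = (mz r n p).card * (a + p + 1) + (mz r n (p + 1)).card * ((r + 1) * (p + 1)) := by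
    rw [step1, ← step2, step3, hsub]
  rw [mul_comm (p + 1), key]
  ring


end PlateauAux

/-- `cR r n p` is the number of Motzkin paths of length `n` with exactly `p`
plateaus of length `r`; it is `0` when `n < 0` or `p < 0`. -/
noncomputable def cR (r : ℕ) (n p : ℤ) : ℕ :=
  if 0 ≤ n ∧ 0 ≤ p then
    Nat.card {l : List Step // l.length = n.toNat ∧ IsMotzkin l ∧ plateauCountR r l = p.toNat}
  else 0

namespace PlateauAux

lemma cR_cast (r n p : ℕ) : cR r (n : ℤ) (p : ℤ) = (mz r n p).card := by
  rw [cR, if_pos ⟨Int.natCast_nonneg n, Int.natCast_nonneg p⟩, Int.toNat_natCast,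
    Int.toNat_natCast]
  exact card_mz n p

lemma cRq (r : ℕ) (N P : ℤ) (n p : ℕ) (hN : N = (n : ℤ)) (hP : P = (p : ℤ)) :
    (cR r N P : ℚ) = ((mz r n p).card : ℚ) := by
  rw [hN, hP, cR_cast]

end PlateauAux

open PowerSeries in
/-- Working in `ℚ[[x,z]]` realized as `(ℚ[[z]])[[x]]`: the outer variable is `x`
and the inner variable is `z`.  `G(x,z) = Σ cR r n p · x^(n-(r+2)p) z^p`, so the
coefficient of `x^a z^p` is `cR r (a+(r+2)p) p`.  `Gz` is the formal partial
derivative `∂G/∂z`, taken coefficientwise in `x`. -/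
theorem diagonal_pde_r (r : ℕ) (hr : 1 ≤ r)
    (G Gz : PowerSeries (PowerSeries ℚ))
    (hG : G = PowerSeries.mk fun a => PowerSeries.mk fun p => (cR r (a + (r + 2) * p) p : ℚ))
    (hGz : ∀ a : ℕ, PowerSeries.coeff (R := PowerSeries ℚ) a Gz
        = (d⁄dX ℚ) (PowerSeries.coeff (R := PowerSeries ℚ) a G)) :
    (d⁄dX (PowerSeries ℚ)) (X * G)
      = (1 - PowerSeries.C (R := PowerSeries ℚ) X
          - ((r : PowerSeries (PowerSeries ℚ)) + 1) * X ^ (r + 2)) * Gz := by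
  classical
  subst hG
  apply PowerSeries.ext
  intro a
  rw [PowerSeries.coeff_derivative, PowerSeries.coeff_succ_X_mul, sub_mul, sub_mul, one_mul,
    map_sub, map_sub, PowerSeries.coeff_C_mul]
  have hcast : ((r : PowerSeries (PowerSeries ℚ)) + 1) * X ^ (r + 2) * Gz
      = PowerSeries.C (R := PowerSeries ℚ) ((r : PowerSeries ℚ) + 1) * (Gz * X ^ (r + 2)) := by
    rw [map_add, map_one, map_natCast]
    ring
  rw [hcast, PowerSeries.coeff_C_mul, PowerSeries.coeff_mul_X_pow']
  have h1 := hGz a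
  simp only [PowerSeries.coeff_mk] at h1 ⊢
  rw [h1]
  have hX : ∀ g : PowerSeries ℚ, ∀ p : ℕ,
      PowerSeries.coeff (R := ℚ) p (X * (d⁄dX ℚ) g) = (p : ℚ) * PowerSeries.coeff (R := ℚ) p g := by
    intro g p
    rcases p with _ | q
    · simp
    · rw [PowerSeries.coeff_succ_X_mul, PowerSeries.coeff_derivative]
      push_cast
      ring
  have hC : ∀ m : ℕ, ((m : PowerSeries ℚ) + 1) = PowerSeries.C (R := ℚ) ((m : ℚ) + 1) := by
    intro m
    rw [map_add, map_one, map_natCast]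
  by_cases har : r + 2 ≤ a
  · rw [if_pos har, hGz (a - (r + 2))]
    simp only [PowerSeries.coeff_mk]
    apply PowerSeries.ext
    intro p
    rw [map_sub, map_sub, hC r, PowerSeries.coeff_C_mul, hX, hC a, PowerSeries.coeff_mul_C,
      PowerSeries.coeff_derivative, PowerSeries.coeff_derivative, PowerSeries.coeff_mk,
      PowerSeries.coeff_mk, PowerSeries.coeff_mk]
    rw [PlateauAux.cRq r _ _ (a + (r + 2) * p) p (by push_cast; ring) rfl,
      PlateauAux.cRq r _ _ (a + (r + 2) * p + (r + 2)) (p + 1) (by push_cast; ring) (by push_cast; ring),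
      PlateauAux.cRq r _ _ (a + (r + 2) * p) (p + 1)
        (by rw [Nat.cast_sub har]; push_cast; ring) (by push_cast; ring)]
    have keyQ : ((p : ℚ) + 1) * ((PlateauAux.mz r (a + (r + 2) * p + (r + 2)) (p + 1)).card : ℚ)
        = ((a : ℚ) + (p : ℚ) + 1) * ((PlateauAux.mz r (a + (r + 2) * p) p).card : ℚ)
          + ((r : ℚ) + 1) * ((p : ℚ) + 1)
            * ((PlateauAux.mz r (a + (r + 2) * p) (p + 1)).card : ℚ) := by
      exact_mod_cast PlateauAux.main_count r a p
    push_cast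
    linear_combination -keyQ
  · rw [if_neg har, mul_zero, sub_zero]
    apply PowerSeries.ext
    intro p
    rw [map_sub, hX, hC a, PowerSeries.coeff_mul_C,
      PowerSeries.coeff_derivative, PowerSeries.coeff_mk, PowerSeries.coeff_mk]
    rw [PlateauAux.cRq r _ _ (a + (r + 2) * p) p (by push_cast; ring) rfl,
      PlateauAux.cRq r _ _ (a + (r + 2) * p + (r + 2)) (p + 1) (by push_cast; ring) (by push_cast; ring)]
    have hz : PlateauAux.mz r (a + (r + 2) * p) (p + 1) = ∅ := by
      apply PlateauAux.mz_eq_empty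
      have h2 : (r + 2) * (p + 1) = (r + 2) * p + (r + 2) := by ring
      omega
    have keyQ : ((p : ℚ) + 1) * ((PlateauAux.mz r (a + (r + 2) * p + (r + 2)) (p + 1)).card : ℚ)
        = ((a : ℚ) + (p : ℚ) + 1) * ((PlateauAux.mz r (a + (r + 2) * p) p).card : ℚ) := by
      have := PlateauAux.main_count r a p
      rw [hz, Finset.card_empty, mul_zero, add_zero] at this
      exact_mod_cast this
    push_cast
    linear_combination -keyQ
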